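/- arXiv:1410.3168 — 2 statements merged into one kernel-verified Lean document; each statement's English description precedes it below -/
import Mathlib

section
/- Let n = 2k+1 be odd with k ≥ 1, and let C_n be the cycle graph on vertices 1,…,n. Then the Green's function 𝔾 of C_n is given by 𝔾(x,y) = (2/(2k+1)) · C(k + 1 − |x−y|_c, 2) − (k² + k)/(3(2k+1)) for all vertices x, y, where |x−y|_c denotes the graph distance between x and y in C_n and C(m,2) = m(m−1)/2 is the binomial coefficient. -/
/-!
Fix a row `x` of `𝔾` and write `n = 2k+1`. The row `f = 𝔾 x` satisfies
`f w - (f (w - 1) + f (w + 1)) / 2 = δ x w - 1/n` and `∑ f = 0`, and these equations have at most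
one solution: the difference `h` of two solutions is harmonic, so its increments `h (w + 1) - h w`
are constant; they sum to zero around the cycle, hence vanish, so `h` is constant with sum zero.

It remains to check the candidate `w ↦ g (x - w)`, where `g t` is the quadratic of the statement.
Its second difference is the constant `2/n`, which gives the equation away from `x`; the symmetry
`g (n - t) = g t` takes care of the wrap-around, and at `w = x` both neighbours are at distance `1`,
which accounts for the extra `1`. The constant term of `g` makes the row sum vanish.
-/

/-- The graph distance `|x−y|_c = min(|x−y|, n−|x−y|)` between two vertices of the cycle
`C_n`. -/
def cycleDist (n : ℕ) (x y : Fin n) : ℕ :=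
  min ((x : ℤ) - (y : ℤ)).natAbs (n - ((x : ℤ) - (y : ℤ)).natAbs)

open Finset SimpleGraph

theorem Fin.apply_eq_apply_zero_of_apply_add_one {n : ℕ} {α : Type*} {f : Fin (n + 1) → α}
    (hf : ∀ z, f (z + 1) = f z) (z : Fin (n + 1)) : f z = f 0 := by
  induction z using Fin.induction with
  | zero => rfl
  | succ i ih => rw [← Fin.coeSucc_eq_succ, hf, ih]

theorem Fin.sum_comp_add_one {n : ℕ} {M : Type*} [AddCommMonoid M] (f : Fin (n + 1) → M) :
    ∑ z, f (z + 1) = ∑ z, f z :=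
  Fintype.sum_equiv (Equiv.addRight 1) _ _ fun _ => rfl

theorem cycleGraph_mul_adjMatrix_apply {n : ℕ} (hn : 2 ≤ n) {α : Type*} [NonAssocSemiring α]
    (M : Matrix (Fin (n + 1)) (Fin (n + 1)) α) (v w : Fin (n + 1)) :
    (M * (cycleGraph (n + 1)).adjMatrix α) v w = M v (w - 1) + M v (w + 1) := by
  obtain ⟨m, rfl⟩ : ∃ m, n = m + 2 := ⟨n - 2, by omega⟩
  have hne : w - 1 ≠ w + 1 := by
    simp only [ne_eq, sub_eq_iff_eq_add, add_assoc w, left_eq_add]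
    exact ne_of_beq_false rfl
  rw [mul_adjMatrix_apply, cycleGraph_neighborFinset, sum_pair hne]

/-- The Laplacian `I - D⁻¹A` of the cycle, acting on functions on its vertices. -/
noncomputable def cycleLaplacian {n : ℕ} (f : Fin (n + 1) → ℝ) (y : Fin (n + 1)) : ℝ :=
  f y - (f (y - 1) + f (y + 1)) / 2

theorem mul_one_sub_half_mul_cycleGraph_adjMatrix_apply {n : ℕ} (hn : 2 ≤ n)
    (M : Matrix (Fin (n + 1)) (Fin (n + 1)) ℝ) (x w : Fin (n + 1)) :
    (M * (1 - (Matrix.diagonal fun _ => (2 : ℝ)⁻¹ : Matrix (Fin (n + 1)) (Fin (n + 1)) ℝ)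
      * (cycleGraph (n + 1)).adjMatrix ℝ)) x w
      = cycleLaplacian (M x) w := by
  rw [Matrix.mul_sub, Matrix.mul_one, ← Matrix.mul_assoc, Matrix.sub_apply,
    cycleGraph_mul_adjMatrix_apply hn, Matrix.mul_diagonal, Matrix.mul_diagonal, cycleLaplacian]
  ring

theorem cycleLaplacian_comp_sub_left {n : ℕ} (f : Fin (n + 1) → ℝ) (x w : Fin (n + 1)) :
    cycleLaplacian (fun w => f (x - w)) w = cycleLaplacian f (x - w) := by
  have hsub : x - (w - 1) = x - w + 1 := by abel
  have hadd : x - (w + 1) = x - w - 1 := by abel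
  simp only [cycleLaplacian, hsub, hadd]
  ring

theorem cycleLaplacian_sub {n : ℕ} (f g : Fin (n + 1) → ℝ) (y : Fin (n + 1)) :
    cycleLaplacian (f - g) y = cycleLaplacian f y - cycleLaplacian g y := by
  simp only [cycleLaplacian, Pi.sub_apply]
  ring

theorem eq_zero_of_cycleLaplacian_eq_zero {n : ℕ} {f : Fin (n + 1) → ℝ}
    (hf : ∀ y, cycleLaplacian f y = 0) (hsum : ∑ y, f y = 0) : f = 0 := by
  have const_eq_zero :
      ∀ g : Fin (n + 1) → ℝ, (∀ z, g (z + 1) = g z) → ∑ z, g z = 0 → g = 0 := by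
    intro g hg hg0
    have hg_zero : g 0 = 0 := by
      simpa [Fin.apply_eq_apply_zero_of_apply_add_one hg, Nat.cast_add_one_ne_zero]
        using hg0
    exact funext fun z => (Fin.apply_eq_apply_zero_of_apply_add_one hg z).trans hg_zero
  have hdiff : (fun z => f (z + 1) - f z) = 0 := by
    refine const_eq_zero _ (fun z => ?_) ?_
    · have := hf (z + 1)
      rw [cycleLaplacian, add_sub_cancel_right] at this
      linarith
    · rw [sum_sub_distrib, Fin.sum_comp_add_one, sub_self]
  exact const_eq_zero f (fun z => sub_eq_zero.mp (congrFun hdiff z)) hsum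

theorem eq_of_cycleLaplacian_eq {n : ℕ} {f g : Fin (n + 1) → ℝ}
    (hfg : ∀ y, cycleLaplacian f y = cycleLaplacian g y) (hsum : ∑ y, f y = ∑ y, g y) :
    f = g :=
  sub_eq_zero.mp <| eq_zero_of_cycleLaplacian_eq_zero
    (fun y => by rw [cycleLaplacian_sub, hfg, sub_self])
    (by simp only [Pi.sub_apply]; rw [sum_sub_distrib, hsum, sub_self])

noncomputable def oddCycleGreen (k : ℕ) (t : ℝ) : ℝ :=
  2 / (2 * (k : ℝ) + 1) * (((k : ℝ) + 1 - t) * (((k : ℝ) + 1 - t) - 1) / 2)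
    - ((k : ℝ) ^ 2 + (k : ℝ)) / (3 * (2 * (k : ℝ) + 1))

theorem oddCycleGreen_two_mul_add_one_sub (k : ℕ) (t : ℝ) :
    oddCycleGreen k (2 * k + 1 - t) = oddCycleGreen k t := by
  unfold oddCycleGreen
  ring

theorem oddCycleGreen_sub_average (k : ℕ) (t : ℝ) :
    oddCycleGreen k t - (oddCycleGreen k (t - 1) + oddCycleGreen k (t + 1)) / 2
      = -(2 / (2 * (2 * (k : ℝ) + 1))) := by
  unfold oddCycleGreen
  field_simp
  ring

theorem sum_range_oddCycleGreen (k m : ℕ) :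
    ∑ i ∈ range m, oddCycleGreen k i
      = m * (m - (2 * k + 1)) * (m - (k + 2)) / (3 * (2 * k + 1)) := by
  induction m with
  | zero => simp
  | succ m ih =>
    rw [sum_range_succ, ih, oddCycleGreen]
    push_cast
    field_simp
    ring

theorem sum_oddCycleGreen_val (k : ℕ) : ∑ z : Fin (2 * k + 1), oddCycleGreen k z.val = 0 := by
  rw [Fin.sum_univ_eq_sum_range (fun i => oddCycleGreen k i), sum_range_oddCycleGreen]
  push_cast
  ring

theorem oddCycleGreen_val_add_one (k : ℕ) (z : Fin (2 * k + 1)) :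
    oddCycleGreen k (z + 1).val = oddCycleGreen k (z.val + 1) := by
  rw [Fin.val_add_one]
  split_ifs with hz
  · rw [hz, Fin.val_last, ← oddCycleGreen_two_mul_add_one_sub]
    push_cast
    ring_nf
  · push_cast
    rfl

theorem cycleLaplacian_oddCycleGreen_val (k : ℕ) (z : Fin (2 * k + 1)) :
    cycleLaplacian (fun z => oddCycleGreen k z.val) z
      = (if z = 0 then 1 else 0) - 2 / (2 * (2 * (k : ℝ) + 1)) := by
  rw [cycleLaplacian, oddCycleGreen_val_add_one, Fin.coe_sub_one]
  split_ifs with hz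
  · rw [hz]
    unfold oddCycleGreen
    push_cast [Fin.val_zero]
    field_simp
    ring
  · have hz_pos : 1 ≤ z.val := Nat.one_le_iff_ne_zero.mpr (Fin.val_ne_zero_iff.mpr hz)
    rw [Nat.cast_sub hz_pos, Nat.cast_one, oddCycleGreen_sub_average]
    ring

theorem cycleDist_eq_min (n : ℕ) (x y : Fin n) :
    cycleDist n x y = min (x - y).val (n - (x - y).val) := by
  unfold cycleDist
  rcases le_or_gt y x with hyx | hxy
  · rw [Fin.coe_sub_iff_le.mpr hyx]
    omega
  · rw [Fin.coe_sub_iff_lt.mpr hxy]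
    omega

theorem oddCycleGreen_cycleDist (k : ℕ) (x y : Fin (2 * k + 1)) :
    oddCycleGreen k (cycleDist (2 * k + 1) x y) = oddCycleGreen k (x - y).val := by
  rw [cycleDist_eq_min]
  rcases min_choice (x - y).val (2 * k + 1 - (x - y).val) with h | h
  · rw [h]
  · rw [h, Nat.cast_sub (x - y).isLt.le, ← oddCycleGreen_two_mul_add_one_sub]
    push_cast
    ring_nf

/-- For odd `n = 2k+1` with `k ≥ 1`, the Green's function of the cycle `C_n`
is `𝔾(x,y) = (2/(2k+1)) · C(k+1−|x−y|_c, 2) − (k²+k)/(3(2k+1))`, where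
`C(m,2) = m(m−1)/2`. -/
theorem green_function_odd_cycle
    (k : ℕ) (hk : 1 ≤ k)
    -- the Green's function `𝔾` of `C_{2k+1}` (all degrees are `2`, `vol = 2·(2k+1)`)
    (𝔾 : Matrix (Fin (2 * k + 1)) (Fin (2 * k + 1)) ℝ)
    (hG1 : ∀ x y : Fin (2 * k + 1),
      (𝔾 * (1 - ((Matrix.diagonal fun _ => (2 : ℝ)⁻¹ :
              Matrix (Fin (2 * k + 1)) (Fin (2 * k + 1)) ℝ))
          * (SimpleGraph.cycleGraph (2 * k + 1)).adjMatrix ℝ)) x y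
        = (if x = y then (1 : ℝ) else 0) - 2 / (2 * (2 * (k : ℝ) + 1)))
    (hG2 : ∀ x : Fin (2 * k + 1), ∑ y, 𝔾 x y = 0) :
    ∀ x y : Fin (2 * k + 1),
      𝔾 x y = (2 / (2 * (k : ℝ) + 1))
          * (((k : ℝ) + 1 - (cycleDist (2 * k + 1) x y : ℝ))
              * (((k : ℝ) + 1 - (cycleDist (2 * k + 1) x y : ℝ)) - 1) / 2)
        - ((k : ℝ) ^ 2 + (k : ℝ)) / (3 * (2 * (k : ℝ) + 1)) := by
  intro x y
  have hrow : 𝔾 x = fun w => oddCycleGreen k (x - w).val := by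
    refine eq_of_cycleLaplacian_eq (fun w => ?_) ?_
    · rw [← mul_one_sub_half_mul_cycleGraph_adjMatrix_apply (by omega), hG1,
        cycleLaplacian_comp_sub_left (fun z => oddCycleGreen k z.val),
        cycleLaplacian_oddCycleGreen_val]
      simp only [sub_eq_zero]
    · rw [hG2, eq_comm]
      exact ((Equiv.subLeft x).sum_comp _).trans (sum_oddCycleGreen_val k)
  rw [congrFun hrow y, ← oddCycleGreen_cycleDist]
  rfl
end

section
/- Let Q_n be the hypercube graph on the binary strings of length n, let 𝔾 be its Green's function, let 𝟎 be the all-zero string and 𝟏 the all-one string, and let x be a vertex at Hamming distance k from 𝟎. Then 𝔾(𝟎,x) − 𝔾(𝟏,x) = 2^{−n} Σ_{j=k}^{n−k−1} (C(n,j+1) + C(n,j+2) + … + C(n,n)) / C(n−1,j), with the convention that Σ_{j=b}^{a} c_j = −Σ_{j=a}^{b} c_j when b > a. -/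
/-- The hypercube graph `Q_n`: vertices are binary strings of length `n`, with edges joining
pairs of strings differing in exactly one coordinate. -/
def hypercubeGraph (n : ℕ) : SimpleGraph (Fin n → Bool) where
  Adj x y := hammingDist x y = 1
  symm := ⟨fun x y (h : hammingDist x y = 1) => show hammingDist y x = 1 by rwa [hammingDist_comm]⟩
  loopless := ⟨fun x h => by simp only [hammingDist_self] at h; exact absurd h (by omega)⟩

instance hypercubeGraphAdjDecidable (n : ℕ) : DecidableRel (hypercubeGraph n).Adj :=
  fun x y => inferInstanceAs (Decidable (hammingDist x y = 1))

/-!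
Write `L` for the Laplacian of `Q_n`. As `Q_n` is `n`-regular, the defining identity of `𝔾` says
`L 𝔾(a,·) = n (δ_a - 2^{-n})`, so `g = 𝔾(𝟎,·) - 𝔾(𝟏,·)` solves `L g = n (δ_𝟎 - δ_𝟏)` and has sum
zero. On a connected graph these two conditions determine `g`, since the kernel of `L` consists of
the constants. The candidate is the radial function `f(y) = 2^{-n} F(|y|)` with
`F(k) = Σ_{j<n-k} T_j - Σ_{j<k} T_j` and `T_j = (C(n,j+1) + ⋯ + C(n,n)) / C(n-1,j)`. For radial
functions `L` becomes the three-term operator `n F(k) - k F(k-1) - (n-k) F(k+1)`, which the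
reflection identity `T_j + T_{n-1-j} = 2^n / C(n-1,j)` reduces to `n 2^n (δ_{k,0} - δ_{k,n})`.
Finally `F(n-k) = -F(k)`, and complementing strings shows `Σ f = 0`.
-/

open Finset Matrix

section Laplacian

variable {V : Type*} [Fintype V] [DecidableEq V] {G : SimpleGraph V} [DecidableRel G.Adj]

theorem SimpleGraph.IsRegularOfDegree.mul_one_sub_diagonal_inv_mul_adjMatrix_apply {d : ℕ}
    (hG : G.IsRegularOfDegree d) (hd : d ≠ 0) (M : Matrix V V ℝ) (a y : V) :
    (M * (1 - (diagonal fun _ => (d : ℝ)⁻¹ : Matrix V V ℝ) * G.adjMatrix ℝ)) a y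
      = (d : ℝ)⁻¹ * (G.lapMatrix ℝ *ᵥ M a) y := by
  have hdeg : G.degMatrix ℝ = (d : ℝ) • 1 := by
    simp only [SimpleGraph.degMatrix, hG.degree_eq, smul_one_eq_diagonal]
  have hrw : 1 - diagonal (fun _ => (d : ℝ)⁻¹) * G.adjMatrix ℝ = (d : ℝ)⁻¹ • G.lapMatrix ℝ := by
    rw [SimpleGraph.lapMatrix, hdeg, smul_sub, smul_smul, inv_mul_cancel₀ (by exact_mod_cast hd),
      one_smul, ← smul_one_eq_diagonal, smul_one_mul]
  rw [hrw, Matrix.mul_smul, Matrix.smul_apply, smul_eq_mul, mul_apply_eq_vecMul,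
    ← vecMul_transpose, (G.isSymm_lapMatrix ℝ).eq]

theorem SimpleGraph.Connected.eq_of_lapMatrix_mulVec_eq_of_sum_eq (hG : G.Connected)
    {u v : V → ℝ} (hL : G.lapMatrix ℝ *ᵥ u = G.lapMatrix ℝ *ᵥ v) (hs : ∑ x, u x = ∑ x, v x) :
    u = v := by
  have hker : G.lapMatrix ℝ *ᵥ (u - v) = 0 := by rw [mulVec_sub, hL, sub_self]
  obtain ⟨a⟩ := hG.nonempty
  have hconst : ∀ x, (u - v) x = (u - v) a :=
    fun x => G.lapMatrix_mulVec_eq_zero_iff_forall_reachable.1 hker x a (hG x a)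
  have hsum : (Fintype.card V : ℝ) * (u - v) a = 0 := calc
    _ = ∑ x, (u - v) x := by simp only [hconst, sum_const, card_univ, nsmul_eq_mul]
    _ = 0 := by simp only [Pi.sub_apply, sum_sub_distrib, hs, sub_self]
  have hcard : (Fintype.card V : ℝ) ≠ 0 := by exact_mod_cast (Fintype.card_pos_iff.2 ⟨a⟩).ne'
  funext x
  rw [← sub_eq_zero, ← Pi.sub_apply, hconst, (mul_eq_zero.1 hsum).resolve_left hcard]

end Laplacian

namespace Hypercube

variable {n : ℕ}

def flipBit (y : Fin n → Bool) (i : Fin n) : Fin n → Bool := Function.update y i (!y i)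

def weight (y : Fin n → Bool) : ℕ := hammingDist y fun _ => false

theorem flipBit_injective (y : Fin n → Bool) : Function.Injective (flipBit y) := by
  intro i j hij
  by_contra hne
  have := congrFun hij i
  simp [flipBit, hne] at this

theorem hypercubeGraph_adj_iff {y z : Fin n → Bool} :
    (hypercubeGraph n).Adj y z ↔ ∃ i, z = flipBit y i := by
  change hammingDist y z = 1 ↔ _
  simp only [hammingDist, card_eq_one, Finset.ext_iff, funext_iff, flipBit,
    Function.update_apply, mem_filter, mem_univ, true_and, mem_singleton]
  refine exists_congr fun i => forall_congr' fun j => ?_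
  rcases eq_or_ne j i with rfl | hj <;> cases y j <;> cases z j <;> simp [*]

theorem hypercubeGraph_neighborFinset (y : Fin n → Bool) :
    (hypercubeGraph n).neighborFinset y = univ.image (flipBit y) := by
  ext z
  simp [hypercubeGraph_adj_iff, eq_comm]

theorem hypercubeGraph_isRegularOfDegree : (hypercubeGraph n).IsRegularOfDegree n := by
  intro y
  rw [← SimpleGraph.card_neighborFinset_eq_degree, hypercubeGraph_neighborFinset,
    card_image_of_injective _ (flipBit_injective y), card_univ, Fintype.card_fin]

theorem weight_eq_card (y : Fin n → Bool) : weight y = #{i | y i = true} := by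
  simp [weight, hammingDist]

theorem weight_le (y : Fin n → Bool) : weight y ≤ n := by
  rw [weight_eq_card]
  exact (card_filter_le _ _).trans_eq (card_fin n)

theorem weight_eq_zero_iff {y : Fin n → Bool} : weight y = 0 ↔ y = fun _ => false :=
  hammingDist_eq_zero

theorem weight_eq_self_iff {y : Fin n → Bool} : weight y = n ↔ y = fun _ => true := by
  have h : #{i | y i = true} = #(univ : Finset (Fin n)) ↔ _ := card_filter_eq_iff
  rw [card_fin] at h
  simp [weight_eq_card, h, funext_iff]

theorem weight_not (y : Fin n → Bool) : weight (fun i => !y i) = n - weight y := by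
  have h := card_compl ({i | y i = true} : Finset (Fin n))
  rw [Fintype.card_fin, compl_filter] at h
  simpa [weight_eq_card] using h

theorem weight_flipBit (y : Fin n → Bool) (i : Fin n) :
    weight (flipBit y i) = if y i then weight y - 1 else weight y + 1 := by
  simp only [weight_eq_card]
  cases hi : y i
  · rw [if_neg (by simp), ← card_insert_of_notMem (s := {j | y j = true}) (a := i) (by simp [hi])]
    congr 1
    ext j
    by_cases hj : j = i <;> simp [flipBit, Function.update_apply, hj, hi]
  · rw [if_pos rfl, ← card_erase_of_mem (s := {j | y j = true}) (a := i) (by simp [hi])]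
    congr 1
    ext j
    by_cases hj : j = i <;> simp [flipBit, Function.update_apply, hj, hi]

theorem hypercubeGraph_connected : (hypercubeGraph n).Connected := by
  refine (SimpleGraph.connected_iff_exists_forall_reachable _).2 ⟨fun _ => false, fun y => ?_⟩
  induction h : weight y generalizing y with
  | zero => rw [weight_eq_zero_iff.1 h]
  | succ m ih =>
    obtain ⟨i, hi⟩ := card_pos.1 (by rw [← weight_eq_card, h]; omega)
    rw [mem_filter] at hi
    have hflip : weight (flipBit y i) = m := by rw [weight_flipBit, if_pos hi.2, h]; rfl
    exact (ih _ hflip).trans (hypercubeGraph_adj_iff.2 ⟨i, rfl⟩).reachable.symm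

theorem lapMatrix_mulVec_comp_weight (φ : ℕ → ℝ) (y : Fin n → Bool) :
    ((hypercubeGraph n).lapMatrix ℝ *ᵥ fun z => φ (weight z)) y
      = n * φ (weight y)
        - (weight y * φ (weight y - 1) + (n - weight y : ℕ) * φ (weight y + 1)) := by
  rw [SimpleGraph.lapMatrix_mulVec_apply, hypercubeGraph_isRegularOfDegree.degree_eq,
    hypercubeGraph_neighborFinset, sum_image fun i _ j _ h => flipBit_injective y h]
  simp only [weight_flipBit, apply_ite φ]
  rw [sum_ite, sum_const, sum_const, ← weight_eq_card, nsmul_eq_mul, nsmul_eq_mul]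
  have hcard := card_filter_add_card_filter_not (s := univ) fun i => y i = true
  rw [← weight_eq_card, card_fin] at hcard
  rw [show #{i | ¬y i = true} = n - weight y by omega]

theorem sum_comp_weight_eq_zero {φ : ℕ → ℝ} (hφ : ∀ k ≤ n, φ (n - k) = -φ k) :
    ∑ y : Fin n → Bool, φ (weight y) = 0 := by
  have hnot : Function.Involutive fun y : Fin n → Bool => fun i => !y i :=
    fun y => funext fun i => Bool.not_not (y i)
  have hsum := Fintype.sum_bijective _ hnot.bijective (fun y => φ (weight fun i => !y i))
    (fun y => φ (weight y)) fun _ => rfl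
  simp only [weight_not, hφ _ (weight_le _), sum_neg_distrib] at hsum
  linarith

end Hypercube

noncomputable def tailRatio (n j : ℕ) : ℝ :=
  (∑ i ∈ Icc (j + 1) n, (n.choose i : ℝ)) / ((n - 1).choose j : ℝ)

noncomputable def antipodalPotential (n k : ℕ) : ℝ :=
  ∑ j ∈ range (n - k), tailRatio n j - ∑ j ∈ range k, tailRatio n j

theorem antipodalPotential_eq_sum_Ico_sub_sum_Ico (n k : ℕ) :
    antipodalPotential n k
      = ∑ j ∈ Ico k (n - k), tailRatio n j - ∑ j ∈ Ico (n - k) k, tailRatio n j := by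
  rcases le_total k (n - k) with h | h
  · rw [sum_Ico_eq_sub _ h, Ico_eq_empty_of_le h, sum_empty, sub_zero, antipodalPotential]
  · rw [sum_Ico_eq_sub _ h, Ico_eq_empty_of_le h, sum_empty, zero_sub, neg_sub,
      antipodalPotential]

theorem antipodalPotential_sub_self {n k : ℕ} (hk : k ≤ n) :
    antipodalPotential n (n - k) = -antipodalPotential n k := by
  rw [antipodalPotential, antipodalPotential, Nat.sub_sub_self hk, neg_sub]

theorem sum_Icc_choose_add_sum_Icc_choose {n j : ℕ} (hj : j < n) :
    ∑ i ∈ Icc (j + 1) n, n.choose i + ∑ i ∈ Icc (n - j) n, n.choose i = 2 ^ n := by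
  have hreflect : ∑ i ∈ Icc (n - j) n, n.choose i = ∑ i ∈ range (j + 1), n.choose i := by
    have h := sum_Ico_reflect n.choose 0 (show j + 1 ≤ n + 1 by omega)
    rw [show n + 1 - (j + 1) = n - j by omega, Nat.sub_zero, Ico_add_one_right_eq_Icc,
      Ico_add_one_right_eq_Icc] at h
    rw [range_eq_Ico, Ico_add_one_right_eq_Icc, ← h]
    exact sum_congr rfl fun i hi => Nat.choose_symm (by simp at hi; omega)
  rw [hreflect, ← Ico_add_one_right_eq_Icc, add_comm, sum_range_add_sum_Ico _ (by omega),
    Nat.sum_range_choose]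

theorem tailRatio_add_tailRatio_sub {n j : ℕ} (hj : j < n) :
    tailRatio n j + tailRatio n (n - 1 - j) = 2 ^ n / (n - 1).choose j := by
  rw [tailRatio, tailRatio, Nat.choose_symm (by omega), ← add_div,
    show n - 1 - j + 1 = n - j by omega]
  exact_mod_cast congrArg (fun m : ℕ => (m : ℝ) / (n - 1).choose j)
    (sum_Icc_choose_add_sum_Icc_choose hj)

theorem sum_range_weighted_second_difference (T : ℕ → ℝ) (a b : ℕ) :
    (a + b) * ∑ j ∈ range a, T j - a * ∑ j ∈ range (a - 1), T j - b * ∑ j ∈ range (a + 1), T j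
      = a * T (a - 1) - b * T a := by
  cases a with
  | zero => simp
  | succ a => simp only [sum_range_succ, add_tsub_cancel_right]; push_cast; ring

theorem antipodalPotential_recurrence_eq {n k : ℕ} (hk : k ≤ n) :
    n * antipodalPotential n k - k * antipodalPotential n (k - 1)
        - (n - k : ℕ) * antipodalPotential n (k + 1)
      = (n - k : ℕ) * (tailRatio n k + tailRatio n (n - 1 - k))
        - k * (tailRatio n (k - 1) + tailRatio n (n - k)) := by
  set m := n - k
  have hn : (n : ℝ) = k + m := by exact_mod_cast (Nat.add_sub_cancel' hk).symm
  have hprev : (k : ℝ) * antipodalPotential n (k - 1)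
      = k * (∑ j ∈ range (m + 1), tailRatio n j - ∑ j ∈ range (k - 1), tailRatio n j) := by
    -- `n - (k - 1) = m + 1` fails only at `k = 0`, where the factor `k` vanishes.
    rcases Nat.eq_zero_or_pos k with rfl | hk0
    · simp
    · rw [antipodalPotential, show n - (k - 1) = m + 1 by omega]
  have hnext : antipodalPotential n (k + 1)
      = ∑ j ∈ range (m - 1), tailRatio n j - ∑ j ∈ range (k + 1), tailRatio n j := by
    rw [antipodalPotential, show n - (k + 1) = m - 1 by omega]
  have hm := sum_range_weighted_second_difference (tailRatio n) m k
  have hk' := sum_range_weighted_second_difference (tailRatio n) k m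
  rw [hprev, hnext, antipodalPotential, hn, show n - 1 - k = m - 1 by omega]
  linear_combination hm - hk'

theorem antipodalPotential_recurrence {n k : ℕ} (hn : 0 < n) (hk : k ≤ n) :
    n * antipodalPotential n k - k * antipodalPotential n (k - 1)
        - (n - k : ℕ) * antipodalPotential n (k + 1)
      = n * 2 ^ n * ((if k = 0 then 1 else 0) - if k = n then 1 else 0) := by
  rw [antipodalPotential_recurrence_eq hk]
  rcases Nat.eq_zero_or_pos k with rfl | hk0
  · rw [tailRatio_add_tailRatio_sub hn]
    simp [hn.ne]
  rcases hk.eq_or_lt with rfl | hkn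
  · have h := tailRatio_add_tailRatio_sub (n := k) (j := k - 1) (by omega)
    rw [show k - 1 - (k - 1) = 0 by omega, Nat.choose_self, Nat.cast_one, div_one] at h
    simp [hk0.ne', h]
  rw [show n - k = n - 1 - (k - 1) by omega, tailRatio_add_tailRatio_sub hkn,
    tailRatio_add_tailRatio_sub (by omega), if_neg hk0.ne', if_neg hkn.ne, sub_zero, mul_zero,
    show n - 1 - (k - 1) = n - k by omega]
  have hcross := Nat.choose_succ_right_eq (n - 1) (k - 1)
  rw [Nat.sub_add_cancel hk0, show n - 1 - (k - 1) = n - k by omega] at hcross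
  have hcross' : ((n - k : ℕ) : ℝ) * (n - 1).choose (k - 1) = (n - 1).choose k * k := by
    exact_mod_cast (hcross.trans (mul_comm _ _)).symm
  have hpos : 0 < (n - 1).choose k := Nat.choose_pos (by omega)
  have hpos' : 0 < (n - 1).choose (k - 1) := Nat.choose_pos (by omega)
  field_simp
  rw [hcross', sub_self, mul_zero, mul_zero]

open Hypercube

/-- For the Green's function `𝔾` of the hypercube `Q_n` and a vertex `x` at
Hamming distance `k` from the all-zero string `𝟎`,
`𝔾(𝟎,x) − 𝔾(𝟏,x) = 2^{−n} Σ_{j=k}^{n−k−1} (C(n,j+1) + … + C(n,n))/C(n−1,j)`, with the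
convention that a sum `Σ_{j=b}^{a}` with `b > a` is the negative of the corresponding reversed
sum (formalized by the difference of the two one-sided sums below, at most one of which is
nonempty). -/
theorem green_function_hypercube_antipodal_difference
    (n : ℕ)
    -- the Green's function `𝔾` of `Q_n` (it is `n`-regular with `vol(Q_n) = n·2^n`)
    (𝔾 : Matrix (Fin n → Bool) (Fin n → Bool) ℝ)
    (hG1 : ∀ x y : Fin n → Bool,
      (𝔾 * (1 - ((Matrix.diagonal fun _ => ((n : ℝ))⁻¹ :
              Matrix (Fin n → Bool) (Fin n → Bool) ℝ))
          * (hypercubeGraph n).adjMatrix ℝ)) x y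
        = (if x = y then (1 : ℝ) else 0) - (n : ℝ) / ((n : ℝ) * 2 ^ n))
    (hG2 : ∀ x : Fin n → Bool, ∑ y, 𝔾 x y = 0)
    (x : Fin n → Bool) (k : ℕ) (hk : hammingDist x (fun _ => false) = k) :
    𝔾 (fun _ => false) x - 𝔾 (fun _ => true) x
      = ((2 : ℝ) ^ n)⁻¹ *
          ((∑ j ∈ Finset.Ico k (n - k),
              (∑ i ∈ Finset.Icc (j + 1) n, (n.choose i : ℝ)) / ((n - 1).choose j : ℝ))
           - ∑ j ∈ Finset.Ico (n - k) k,
              (∑ i ∈ Finset.Icc (j + 1) n, (n.choose i : ℝ)) / ((n - 1).choose j : ℝ)) := by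
  obtain rfl | hn := n.eq_zero_or_pos
  · subst hk
    simp [Subsingleton.elim (fun _ : Fin 0 => false) fun _ => true]
  have hrow (a y : Fin n → Bool) : ((hypercubeGraph n).lapMatrix ℝ *ᵥ 𝔾 a) y
      = n * ((if a = y then 1 else 0) - n / (n * 2 ^ n)) := by
    rw [← hG1, hypercubeGraph_isRegularOfDegree.mul_one_sub_diagonal_inv_mul_adjMatrix_apply
      hn.ne', mul_inv_cancel_left₀ (by positivity)]
  have hpotential : 𝔾 (fun _ => false) - 𝔾 (fun _ => true)
      = fun y => (2 ^ n)⁻¹ * antipodalPotential n (weight y) := by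
    refine hypercubeGraph_connected.eq_of_lapMatrix_mulVec_eq_of_sum_eq (funext fun y => ?_) ?_
    · rw [mulVec_sub, Pi.sub_apply, hrow, hrow,
        lapMatrix_mulVec_comp_weight (fun k => (2 ^ n)⁻¹ * antipodalPotential n k)]
      have hrec := antipodalPotential_recurrence hn (weight_le y)
      simp only [weight_eq_zero_iff, weight_eq_self_iff, eq_comm (a := y)] at hrec
      field_simp
      linarith
    · simp only [Pi.sub_apply, sum_sub_distrib, hG2, sub_zero, ← mul_sum,
        sum_comp_weight_eq_zero fun k hk => antipodalPotential_sub_self hk, mul_zero]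
  have hx := congrFun hpotential x
  rw [Pi.sub_apply] at hx
  rw [hx, weight, hk, antipodalPotential_eq_sum_Ico_sub_sum_Ico]
  rfl
end
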